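/- Let u and v be factors of the Thue–Morse word t of the same length n ≥ 4 (so that each of u, v occurs in t only at positions of one fixed parity). Then u and v are 2-abelian equivalent if and only if u and v have the same first letter, p(u) = p(v), and either p(u) is even or the occurrence positions of u and the occurrence positions of v in t have the same parity. -/

import Mathlib

/-- The Thue–Morse sequence: sum of binary digits of `n`, mod 2. -/
def tm (n : ℕ) : Fin 2 := Fin.ofNat 2 (Nat.digits 2 n).sum

/-- The factor of the Thue–Morse word of length `n` starting at position `i`. -/
def tmWord (i n : ℕ) : List (Fin 2) := (List.range n).map (fun j => tm (i + j))

/-- A binary word is a factor of the Thue–Morse word. -/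
def IsFactor (w : List (Fin 2)) : Prop := ∃ i : ℕ, w = tmWord i w.length

/-- Number of occurrences of the word `x` as a factor of `u`. -/
def occCount (u x : List (Fin 2)) : ℕ :=
  ((List.range u.length).filter (fun i => (u.drop i).take x.length = x)).length

/-- Two binary words (of equal length) are 2-abelian equivalent: same first letter,
same last letter, and the same number of occurrences of every word of length 2. -/
def TwoAbelianEquiv (u v : List (Fin 2)) : Prop :=
  u.length = v.length ∧ u.take 1 = v.take 1 ∧
  u.drop (u.length - 1) = v.drop (v.length - 1) ∧
  ∀ x : List (Fin 2), x.length = 2 → occCount u x = occCount v x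

/-- `P n` is the 2-abelian complexity of the Thue–Morse word: the number of
2-abelian equivalence classes of factors of length `n`. -/
noncomputable def P (n : ℕ) : ℕ :=
  Nat.card (Quot (fun u v : {w : List (Fin 2) // w.length = n ∧ IsFactor w} =>
    TwoAbelianEquiv u.1 v.1))

/-- `pword w` counts the pairs in `w`: the total number of occurrences of `00` and `11`. -/
def pword (w : List (Fin 2)) : ℕ := occCount w [0, 0] + occCount w [1, 1]

/-- The set of possible pair counts of Thue–Morse factors of length `n`. -/
def pairs (n : ℕ) : Set ℕ :=
  { m | ∃ w : List (Fin 2), w.length = n ∧ IsFactor w ∧ pword w = m }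

/-- The set of possible pair counts of Thue–Morse factors of length `n`
occurring at some odd position (pure odd factors). -/
def PAIRS (n : ℕ) : Set ℕ := { m | ∃ i : ℕ, i % 2 = 1 ∧ pword (tmWord i n) = m }

/-! In the Thue–Morse word `t` a square `c c` occurs only at odd positions `2k + 1`, and it does
exactly when `t` changes from `c + 1` to `c` at `k`, because `t (2k + 1) = t k + 1` and
`t (2k + 2) = t (k + 1)`. So the `p` squares of a factor at position `i` are the changes of `t`
on an interval starting at `i / 2`. Changes alternate, so `⌈p / 2⌉` of the squares are `c c`
with `c ≠ t (i / 2)` and `⌊p / 2⌋` the other ones, where `t (i / 2) = t i + i mod 2`.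
For any binary word, the first letter and the numbers of `00` and `11` determine the numbers
of `01` and `10` and the last letter. -/

open Finset

def twoFactorCount (f : ℕ → Fin 2) (a b : ℕ) (x y : Fin 2) : ℕ :=
  #{k ∈ Ico a b | f k = x ∧ f (k + 1) = y}

section TwoFactorCount

variable (f : ℕ → Fin 2) {a b : ℕ}

theorem twoFactorCount_succ (hab : a ≤ b) (x y : Fin 2) :
    twoFactorCount f a (b + 1) x y =
      twoFactorCount f a b x y + if f b = x ∧ f (b + 1) = y then 1 else 0 := by
  rw [twoFactorCount, twoFactorCount, ← insert_Ico_right_eq_Ico_add_one hab, filter_insert]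
  split_ifs <;> simp

theorem twoFactorCount_sum (hab : a ≤ b) :
    twoFactorCount f a b 0 0 + twoFactorCount f a b 0 1 + twoFactorCount f a b 1 0 +
      twoFactorCount f a b 1 1 = b - a := by
  induction b, hab using Nat.le_induction with
  | base => simp [twoFactorCount]
  | succ b hab ih =>
    simp only [twoFactorCount_succ f hab]
    have : b + 1 - a = b - a + 1 := by omega
    rw [this, ← ih]
    generalize f b = x, f (b + 1) = y
    fin_cases x <;> fin_cases y <;> simp <;> omega

/-- Between `a` and `b` the changes of `f` away from the letter `c` and back to it alternate. -/
theorem twoFactorCount_balance (hab : a ≤ b) (c : Fin 2) :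
    twoFactorCount f a b (c + 1) c + (if f a = c then 1 else 0) =
      twoFactorCount f a b c (c + 1) + if f b = c then 1 else 0 := by
  induction b, hab using Nat.le_induction with
  | base => simp [twoFactorCount]
  | succ b hab ih =>
    simp only [twoFactorCount_succ f hab]
    generalize f b = x, f (b + 1) = y at ih ⊢
    fin_cases c <;> fin_cases x <;> fin_cases y <;> simp_all <;> omega

end TwoFactorCount

theorem twoFactorCount_eq_of_diag_eq (f g : ℕ → Fin 2) {a b a' b' : ℕ} (hab : a ≤ b)
    (hab' : a' ≤ b') (hlen : b - a = b' - a') (hfirst : f a = g a')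
    (h00 : twoFactorCount f a b 0 0 = twoFactorCount g a' b' 0 0)
    (h11 : twoFactorCount f a b 1 1 = twoFactorCount g a' b' 1 1) :
    (∀ x y, twoFactorCount f a b x y = twoFactorCount g a' b' x y) ∧ f b = g b' := by
  have hf := twoFactorCount_sum f hab
  have hg := twoFactorCount_sum g hab'
  have hfb := twoFactorCount_balance f hab 1
  have hgb := twoFactorCount_balance g hab' 1
  simp only [hfirst, show (1 : Fin 2) + 1 = 0 from rfl] at hfb hgb
  have hlast : f b = g b' := by
    generalize f b = p, g b' = q at hfb hgb
    fin_cases p <;> fin_cases q <;> simp at hfb hgb ⊢ <;> omega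
  refine ⟨fun x y => ?_, hlast⟩
  simp only [hlast] at hfb
  fin_cases x <;> fin_cases y <;> simp <;> split_ifs at hfb hgb <;> omega

theorem List.take_two_drop_eq_iff {α : Type*} (l : List α) (k : ℕ) (x y : α) :
    (l.drop k).take 2 = [x, y] ↔ ∃ h : k + 1 < l.length, l[k] = x ∧ l[k + 1] = y := by
  by_cases h : k + 1 < l.length
  · rw [List.drop_eq_getElem_cons (by omega), List.drop_eq_getElem_cons h]
    simp [-List.getElem_cons_drop, h]
  · simp only [h, IsEmpty.exists_iff, iff_false]
    intro he
    have := congrArg List.length he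
    simp at this
    omega

theorem tm_two_mul (k : ℕ) : tm (2 * k) = tm k := by
  rcases Nat.eq_zero_or_pos k with rfl | hk
  · rfl
  · simp [tm, Nat.digits_def' one_lt_two (by positivity : 0 < 2 * k)]

theorem tm_two_mul_add_one (k : ℕ) : tm (2 * k + 1) = tm k + 1 := by
  rw [tm, Nat.digits_def' one_lt_two (Nat.succ_pos _), List.sum_cons,
    show (2 * k + 1) % 2 = 1 by omega, show (2 * k + 1) / 2 = k by omega, add_comm]
  ext
  simp [tm, Fin.val_add]

theorem tm_eq_tm_div_two_iff (i : ℕ) : tm i = tm (i / 2) ↔ i % 2 = 0 := by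
  rcases Nat.even_or_odd' i with ⟨k, rfl | rfl⟩
  · simp [tm_two_mul]
  · rw [tm_two_mul_add_one, show (2 * k + 1) / 2 = k by omega]
    generalize tm k = x
    fin_cases x <;> simp

theorem tm_div_two_eq_iff {i j : ℕ} (h : tm i = tm j) :
    tm (i / 2) = tm (j / 2) ↔ i % 2 = j % 2 := by
  have hi := tm_eq_tm_div_two_iff i
  have hj := tm_eq_tm_div_two_iff j
  rw [h] at hi
  generalize tm j = x, tm (i / 2) = y, tm (j / 2) = z at hi hj
  fin_cases x <;> fin_cases y <;> fin_cases z <;> simp at hi hj ⊢ <;> omega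

theorem odd_of_tm_eq_tm_succ {k : ℕ} (h : tm k = tm (k + 1)) : k % 2 = 1 := by
  rcases Nat.even_or_odd' k with ⟨m, rfl | rfl⟩
  · rw [tm_two_mul, tm_two_mul_add_one] at h
    exact absurd h (by generalize tm m = x; fin_cases x <;> decide)
  · omega

theorem twoFactorCount_tm_self (a b : ℕ) (c : Fin 2) :
    twoFactorCount tm a b c c = twoFactorCount tm (a / 2) (b / 2) (c + 1) c := by
  apply Finset.card_nbij' (· / 2) (2 * · + 1)
  · intro j hj
    simp only [coe_filter, mem_Ico, Set.mem_ofPred_eq] at hj ⊢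
    obtain ⟨⟨haj, hjb⟩, hx, hy⟩ := hj
    have hodd := odd_of_tm_eq_tm_succ (hx.trans hy.symm)
    have hj : j = 2 * (j / 2) + 1 := by omega
    rw [hj, tm_two_mul_add_one] at hx
    rw [hj, show 2 * (j / 2) + 1 + 1 = 2 * (j / 2 + 1) by ring, tm_two_mul] at hy
    refine ⟨⟨by omega, by omega⟩, by simp [← hx, add_assoc], hy⟩
  · intro k hk
    simp only [coe_filter, mem_Ico, Set.mem_ofPred_eq] at hk ⊢
    obtain ⟨⟨hak, hkb⟩, hx, hy⟩ := hk
    refine ⟨⟨by omega, by omega⟩, ?_, ?_⟩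
    · simp [tm_two_mul_add_one, hx, add_assoc]
    · rwa [show 2 * k + 1 + 1 = 2 * (k + 1) by ring, tm_two_mul]
  · intro j hj
    simp only [coe_filter, mem_Ico, Set.mem_ofPred_eq] at hj
    have := odd_of_tm_eq_tm_succ (hj.2.1.trans hj.2.2.symm)
    simp only
    omega
  · intro k _
    simp only
    omega

theorem twoFactorCount_tm_self_eq_div_two {a b : ℕ} (hab : a ≤ b) (c : Fin 2) :
    twoFactorCount tm a b c c = (twoFactorCount tm a b 0 0 + twoFactorCount tm a b 1 1 +
      if c = tm (a / 2) then 0 else 1) / 2 := by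
  have hab2 : a / 2 ≤ b / 2 := Nat.div_le_div_right hab
  have h0 := twoFactorCount_balance tm hab2 0
  have h1 := twoFactorCount_balance tm hab2 1
  rw [twoFactorCount_tm_self a b c, twoFactorCount_tm_self a b 0, twoFactorCount_tm_self a b 1]
  generalize tm (a / 2) = e, tm (b / 2) = e' at h0 h1 ⊢
  fin_cases c <;> fin_cases e <;> fin_cases e' <;> simp_all <;> omega

theorem tmWord_length (i n : ℕ) : (tmWord i n).length = n := by
  simp [tmWord]

theorem occCount_tmWord (i n : ℕ) (x y : Fin 2) :
    occCount (tmWord i n) [x, y] = twoFactorCount tm i (i + n - 1) x y := by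
  change #{k ∈ range (tmWord i n).length | ((tmWord i n).drop k).take 2 = [x, y]} = _
  apply Finset.card_nbij' (i + ·) (· - i)
  · intro k hk
    simp_all [List.take_two_drop_eq_iff, tmWord, add_assoc]
    omega
  · intro k hk
    simp only [coe_filter, mem_Ico, Set.mem_ofPred_eq] at hk
    have hk' : i + (k - i) = k := by omega
    simp [List.take_two_drop_eq_iff, tmWord, ← add_assoc, hk', hk]
    omega
  · intro k _
    simp
  · intro k hk
    simp only [coe_filter, mem_Ico, Set.mem_ofPred_eq] at hk
    simp only
    omega

theorem tmWord_take_one (i : ℕ) {n : ℕ} (hn : 1 ≤ n) : (tmWord i n).take 1 = [tm i] := by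
  obtain ⟨m, rfl⟩ := Nat.exists_eq_add_of_le' hn
  simp [tmWord, List.range_succ_eq_map]

theorem tmWord_drop_length_sub_one (i : ℕ) {n : ℕ} (hn : 1 ≤ n) :
    (tmWord i n).drop (n - 1) = [tm (i + n - 1)] := by
  obtain ⟨m, rfl⟩ := Nat.exists_eq_add_of_le' hn
  simp [tmWord, List.range_succ]

theorem pword_tmWord (i n : ℕ) :
    pword (tmWord i n) =
      twoFactorCount tm i (i + n - 1) 0 0 + twoFactorCount tm i (i + n - 1) 1 1 := by
  simp only [pword, occCount_tmWord]

theorem occCount_tmWord_self_eq_iff {i j n : ℕ} (hn : 1 ≤ n) (hfirst : tm i = tm j)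
    (hp : pword (tmWord i n) = pword (tmWord j n)) :
    (∀ c, occCount (tmWord i n) [c, c] = occCount (tmWord j n) [c, c]) ↔
      Even (pword (tmWord i n)) ∨ i % 2 = j % 2 := by
  have hi := twoFactorCount_tm_self_eq_div_two (show i ≤ i + n - 1 by omega)
  have hj := twoFactorCount_tm_self_eq_div_two (show j ≤ j + n - 1 by omega)
  rw [pword_tmWord, pword_tmWord] at hp
  rw [pword_tmWord]
  generalize twoFactorCount tm i (i + n - 1) 0 0 + twoFactorCount tm i (i + n - 1) 1 1 = p
    at hi hp ⊢
  rw [← hp] at hj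
  simp only [occCount_tmWord, hi, hj, ← tm_div_two_eq_iff hfirst, Nat.even_iff]
  generalize tm (i / 2) = e, tm (j / 2) = e'
  fin_cases e <;> fin_cases e' <;> simp <;> omega

theorem twoAbelianEquiv_tmWord_iff {i j n : ℕ} (hn : 1 ≤ n) :
    TwoAbelianEquiv (tmWord i n) (tmWord j n) ↔
      tm i = tm j ∧ ∀ c, occCount (tmWord i n) [c, c] = occCount (tmWord j n) [c, c] := by
  simp only [TwoAbelianEquiv, tmWord_length, tmWord_take_one _ hn,
    tmWord_drop_length_sub_one _ hn, List.cons.injEq, and_true, true_and]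
  constructor
  · rintro ⟨hfirst, -, hocc⟩
    exact ⟨hfirst, fun c => hocc [c, c] rfl⟩
  · rintro ⟨hfirst, hdiag⟩
    simp only [occCount_tmWord] at hdiag
    obtain ⟨hocc, hlast⟩ := twoFactorCount_eq_of_diag_eq tm tm (show i ≤ i + n - 1 by omega)
      (show j ≤ j + n - 1 by omega) (by omega) hfirst (hdiag 0) (hdiag 1)
    refine ⟨hfirst, hlast, ?_⟩
    intro x hx
    obtain ⟨x, y, rfl⟩ := List.length_eq_two.mp hx
    simp only [occCount_tmWord, hocc]

theorem thueMorse_twoAbelian_iff (n : ℕ) (hn : 4 ≤ n) (u v : List (Fin 2))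
    (hu : u.length = n) (hv : v.length = n) (hfu : IsFactor u) (hfv : IsFactor v) :
    TwoAbelianEquiv u v ↔
      (u.take 1 = v.take 1 ∧ pword u = pword v ∧
        (Even (pword u) ∨
          ∃ i j : ℕ, u = tmWord i n ∧ v = tmWord j n ∧ i % 2 = j % 2)) := by
  have hn1 : 1 ≤ n := by omega
  obtain ⟨i, hi⟩ := hfu
  obtain ⟨j, hj⟩ := hfv
  rw [hu] at hi
  rw [hv] at hj
  constructor
  · intro h
    subst hi hj
    obtain ⟨hfirst, hdiag⟩ := (twoAbelianEquiv_tmWord_iff hn1).1 h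
    have hp : pword (tmWord i n) = pword (tmWord j n) := by simp only [pword, hdiag]
    exact ⟨h.2.1, hp, ((occCount_tmWord_self_eq_iff hn1 hfirst hp).1 hdiag).imp_right
      fun hpar => ⟨i, j, rfl, rfl, hpar⟩⟩
  · rintro ⟨hfirst, hp, hcase⟩
    obtain ⟨i, j, rfl, rfl, hparity⟩ : ∃ i j, u = tmWord i n ∧ v = tmWord j n ∧
        (Even (pword u) ∨ i % 2 = j % 2) := by
      rcases hcase with heven | ⟨i', j', hi', hj', hpar⟩
      · exact ⟨i, j, hi, hj, Or.inl heven⟩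
      · exact ⟨i', j', hi', hj', Or.inr hpar⟩
    simp only [tmWord_take_one _ hn1, List.cons.injEq, and_true] at hfirst
    exact (twoAbelianEquiv_tmWord_iff hn1).2
      ⟨hfirst, (occCount_tmWord_self_eq_iff hn1 hfirst hp).2 hparity⟩
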